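/- For every real c > 0, the quantity ω^h(c) = sup_{t∈(0,1)} [ (c/6)·t² − (c/3)·t − (1−t)·ln 2 + ln(3 − e^{−2ct/3}) ] is strictly positive. (Thus the exponent of the expected DPLL-GUC search-tree size for 3-coloring random graphs is positive at every average degree c.) -/

import Mathlib

/-!
The exponent vanishes at `t = 0`, and its derivative there is `ln 2`: the terms `∓ c/3` coming
from `-(c/3) t` and from the logarithm cancel. Hence it is positive just to the right of `0`,
and since it is bounded above on `(0, 1)`, its supremum is positive.
-/

/-- ω^h(c) = sup_{t∈(0,1)} [ (c/6)·t² − (c/3)·t − (1−t)·ln 2 + ln(3 − e^{−2ct/3}) ] -/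
noncomputable def omegaH (c : ℝ) : ℝ :=
  sSup ((fun t => (c / 6) * t ^ 2 - (c / 3) * t - (1 - t) * Real.log 2 +
      Real.log (3 - Real.exp (-2 * c * t / 3))) '' Set.Ioo (0 : ℝ) 1)

open Filter Set Topology Real

theorem HasDerivAt.eventually_lt_right {f : ℝ → ℝ} {f' a : ℝ} (hf : HasDerivAt f f' a)
    (hf' : 0 < f') : ∀ᶠ t in 𝓝[>] a, f a < f t := by
  have hslope := (hasDerivAt_iff_tendsto_slope.mp hf).mono_left (nhdsGT_le_nhdsNE a)
  filter_upwards [hslope.eventually (eventually_gt_nhds hf'), self_mem_nhdsWithin]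
    with t hpos (hat : a < t)
  rw [slope_def_field] at hpos
  exact sub_pos.mp ((div_pos_iff_of_pos_right (sub_pos.mpr hat)).mp hpos)

theorem HasDerivAt.exists_mem_Ioo_lt {f : ℝ → ℝ} {f' a b : ℝ} (hf : HasDerivAt f f' a)
    (hf' : 0 < f') (hab : a < b) : ∃ t ∈ Ioo a b, f a < f t :=
  ((hf.eventually_lt_right hf').and (Ioo_mem_nhdsGT hab)).exists.imp fun _ h => ⟨h.2, h.1⟩

noncomputable def omegaHExponent (c t : ℝ) : ℝ :=
  (c / 6) * t ^ 2 - (c / 3) * t - (1 - t) * log 2 + log (3 - exp (-2 * c * t / 3))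

theorem omegaH_eq_sSup (c : ℝ) : omegaH c = sSup (omegaHExponent c '' Ioo 0 1) := rfl

theorem omegaHExponent_zero (c : ℝ) : omegaHExponent c 0 = 0 := by
  norm_num [omegaHExponent]

theorem hasDerivAt_omegaHExponent_zero (c : ℝ) : HasDerivAt (omegaHExponent c) (log 2) 0 := by
  have hexp : HasDerivAt (fun t => 3 - exp (-2 * c * t / 3)) (2 * c / 3) 0 :=
    ((((hasDerivAt_id' (0 : ℝ)).const_mul (-2 * c)).div_const 3).exp).const_sub 3
      |>.congr_deriv (by simp only [neg_mul, mul_zero, zero_div, exp_zero, mul_one, one_mul]; ring)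
  have hpoly : HasDerivAt (fun t : ℝ => (c / 6) * t ^ 2 - (c / 3) * t - (1 - t) * log 2)
      (-(c / 3) + log 2) 0 :=
    (((hasDerivAt_pow 2 (0 : ℝ)).const_mul (c / 6)).fun_sub
      ((hasDerivAt_id' (0 : ℝ)).const_mul (c / 3))).fun_sub
      (((hasDerivAt_id' (0 : ℝ)).const_sub 1).mul_const (log 2)) |>.congr_deriv (by norm_num)
  exact hpoly.fun_add (hexp.log (by norm_num)) |>.congr_deriv (by norm_num; ring)

theorem omegaHExponent_le {c t : ℝ} (hc : 0 ≤ c) (ht : t ∈ Icc (0 : ℝ) 1) :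
    omegaHExponent c t ≤ c / 6 + log 3 := by
  obtain ⟨ht0, ht1⟩ := ht
  have hexp_le_one : exp (-2 * c * t / 3) ≤ 1 := exp_le_one_iff.mpr (by nlinarith)
  have hlog : log (3 - exp (-2 * c * t / 3)) ≤ log 3 :=
    log_le_log (by linarith) (by linarith [exp_pos (-2 * c * t / 3)])
  have hsq : (c / 6) * t ^ 2 ≤ c / 6 := by
    nlinarith [mul_le_mul_of_nonneg_left (pow_le_one₀ ht0 ht1 : t ^ 2 ≤ 1) hc]
  have hlin : 0 ≤ (c / 3) * t + (1 - t) * log 2 := by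
    have := log_pos (by norm_num : (1 : ℝ) < 2)
    positivity
  unfold omegaHExponent
  linarith

theorem bddAbove_omegaHExponent_image {c : ℝ} (hc : 0 ≤ c) :
    BddAbove (omegaHExponent c '' Ioo 0 1) :=
  ⟨c / 6 + log 3, forall_mem_image.mpr fun _ ht => omegaHExponent_le hc (Ioo_subset_Icc_self ht)⟩

theorem omegaH_pos (c : ℝ) (hc : 0 < c) : 0 < omegaH c := by
  obtain ⟨t, ht, hpos⟩ :=
    (hasDerivAt_omegaHExponent_zero c).exists_mem_Ioo_lt (log_pos one_lt_two) zero_lt_one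
  rw [omegaHExponent_zero] at hpos
  rw [omegaH_eq_sSup]
  exact lt_csSup_of_lt (bddAbove_omegaHExponent_image hc.le) (mem_image_of_mem _ ht) hpos
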